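/- arXiv:2605.18356 — 5 statements merged into one kernel-verified Lean document; each statement's English description precedes it below -/
import Mathlib

section
/- Let G = H × P be a finite abelian group with P cyclic of prime order p and gcd(|H|, p) = 1. Let X ⊆ G and suppose that for every integer m coprime to |G|, the set X^{(m)} = { x^m : x ∈ X } either equals X or is disjoint from X. For g ∈ P put X_{H,g} = { h ∈ H : (h, g) ∈ X }. Then for all nonidentity g, g′ ∈ P, the sets X_{H,g} and X_{H,g′} are either equal or disjoint. -/
theorem stmt_2 (H P : Type*) [CommGroup H] [Fintype H] [CommGroup P] [Fintype P]
    (p : ℕ) (hp : p.Prime) (hcyc : IsCyclic P) (hcardP : Fintype.card P = p)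
    (hcop : ¬ p ∣ Fintype.card H)
    (X : Set (H × P))
    (hX : ∀ m : ℕ, Nat.Coprime m (Fintype.card (H × P)) →
      ((fun x : H × P => x ^ m) '' X = X ∨ Disjoint ((fun x : H × P => x ^ m) '' X) X))
    (g g' : P) (hg : g ≠ 1) (hg' : g' ≠ 1) :
    {h : H | (h, g) ∈ X} = {h : H | (h, g') ∈ X} ∨
      Disjoint {h : H | (h, g) ∈ X} {h : H | (h, g') ∈ X} := by
  -- orderOf g = p
  have hordg : orderOf g = p := by
    have hd : orderOf g ∣ p := hcardP ▸ orderOf_dvd_card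
    rcases (Nat.Prime.eq_one_or_self_of_dvd hp _ hd) with h1 | h1
    · exact absurd (orderOf_eq_one_iff.mp h1) hg
    · exact h1
  -- g generates: g' ∈ powers g
  have hgen : g' ∈ Submonoid.powers g := by
    rw [mem_powers_iff_mem_zpowers]
    have : Subgroup.zpowers g = ⊤ := by
      apply Subgroup.eq_top_of_card_eq
      rw [Nat.card_zpowers, hordg, Nat.card_eq_fintype_card, hcardP]
    rw [this]; trivial
  obtain ⟨k, hk⟩ := hgen
  simp only at hk
  have hpk : ¬ p ∣ k := by
    intro hd
    apply hg'
    obtain ⟨c, rfl⟩ := hd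
    rw [← hk, pow_mul, ← hordg, pow_orderOf_eq_one, one_pow]
  have hkp : Nat.Coprime k p :=
    Nat.coprime_comm.mp ((Nat.Prime.coprime_iff_not_dvd hp).mpr hpk)
  have hHp : Nat.Coprime (Fintype.card H) p := by
    exact Nat.coprime_comm.mp ((Nat.Prime.coprime_iff_not_dvd hp).mpr hcop)
  -- CRT
  obtain ⟨m, hm1, hm2⟩ := Nat.chineseRemainder hHp 1 k
  have key : ∀ q a b : ℕ, a ≡ b [MOD q] → Nat.gcd q a = Nat.gcd q b := by
    intro q a b hab
    rw [Nat.gcd_rec q a, Nat.gcd_rec q b, hab]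
  have hmcop : Nat.Coprime m (Fintype.card (H × P)) := by
    rw [Fintype.card_prod, hcardP, Nat.coprime_mul_iff_right]
    constructor
    · have := key (Fintype.card H) m 1 hm1
      simpa [Nat.Coprime, Nat.gcd_comm] using this
    · have := key p m k hm2
      have : Nat.gcd p m = 1 := by rw [this]; exact hkp.symm
      rwa [Nat.Coprime, Nat.gcd_comm]
  -- the power map sends (h, g) to (h, g')
  have hpow : ∀ h : H, (h, g) ^ m = (h, g') := by
    intro h
    have h1 : h ^ m = h := by
      have : m ≡ 1 [MOD orderOf h] :=
        Nat.ModEq.of_dvd (orderOf_dvd_card) hm1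
      calc h ^ m = h ^ 1 := pow_eq_pow_iff_modEq.mpr this
        _ = h := pow_one h
    have h2 : g ^ m = g' := by
      have : m ≡ k [MOD orderOf g] := hordg ▸ hm2
      calc g ^ m = g ^ k := pow_eq_pow_iff_modEq.mpr this
        _ = g' := hk
    exact Prod.ext h1 h2
  have hinj : Function.Injective (fun x : H × P => x ^ m) := by
    have : (Nat.card (H × P)).Coprime m := by
      rw [Nat.card_eq_fintype_card]; exact hmcop.symm
    exact (powCoprime this).injective
  rcases hX m hmcop with heq | hdis
  · left
    ext h
    simp only [Set.mem_setOf_eq]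
    constructor
    · intro hmem
      have : (h, g') ∈ (fun x : H × P => x ^ m) '' X := ⟨(h, g), hmem, hpow h⟩
      rwa [heq] at this
    · intro hmem
      rw [← heq] at hmem
      obtain ⟨x, hx', hxe⟩ := hmem
      have : x = (h, g) := hinj (hxe.trans (hpow h).symm)
      rwa [this] at hx'
  · right
    rw [Set.disjoint_left]
    intro h h1 h2
    exact Set.disjoint_left.mp hdis ⟨(h, g), h1, hpow h⟩ h2
end

section
/- Let K₁ be a group acting on a set Ω₁ with a normal subgroup K₁⁰ ⊴ K₁, let X₁ be a K₁-orbit and Π₁ the set of K₁⁰-orbits contained in X₁; similarly let K₂ act on Ω₂ with K₂⁰ ⊴ K₂, a K₂-orbit X₂, and Π₂ the set of K₂⁰-orbits in X₂. Suppose ψ : K₁/K₁⁰ → K₂/K₂⁰ is a group isomorphism and φ : Π₁ → Π₂ is a bijection such that φ(Δ^σ) = φ(Δ)^{ψ(σ)} for every σ ∈ K₁/K₁⁰ and Δ ∈ Π₁ (where cosets act on the orbit partitions in the induced way). Then the subdirect product K = { (σ, τ) ∈ K₁ × K₂ : ψ(σ K₁⁰) = τ K₂⁰ } acts transitively on the set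 X = ⋃_{Δ ∈ Π₁} Δ × φ(Δ) ⊆ Ω₁ × Ω₂. -/
lemma img_orbit {K Ω : Type*} [Group K] [MulAction K Ω] (N : Subgroup K) [N.Normal]
    (σ : K) (x : Ω) : (σ • ·) '' MulAction.orbit N x = MulAction.orbit N (σ • x) := by
  ext y
  constructor
  · rintro ⟨z, ⟨⟨n, hn⟩, rfl⟩, rfl⟩
    refine ⟨⟨σ * n * σ⁻¹, Subgroup.Normal.conj_mem ‹N.Normal› n hn σ⟩, ?_⟩
    show (σ * n * σ⁻¹) • (σ • x) = σ • n • x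
    simp [mul_smul]
  · rintro ⟨⟨n, hn⟩, rfl⟩
    refine ⟨(σ⁻¹ * n * σ) • x, ⟨⟨σ⁻¹ * n * σ, by simpa using Subgroup.Normal.conj_mem ‹N.Normal› n hn σ⁻¹⟩, rfl⟩, ?_⟩
    show σ • (σ⁻¹ * n * σ) • x = (n : K) • σ • x
    simp [mul_smul]

theorem stmt_3 (K₁ K₂ : Type*) [Group K₁] [Group K₂]
    (Ω₁ Ω₂ : Type*) [MulAction K₁ Ω₁] [MulAction K₂ Ω₂]
    (N₁ : Subgroup K₁) [N₁.Normal] (N₂ : Subgroup K₂) [N₂.Normal]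
    (x₁ : Ω₁) (x₂ : Ω₂)
    (Part₁ : Set (Set Ω₁)) (hPart₁ : Part₁ = {S | ∃ x ∈ MulAction.orbit K₁ x₁, S = MulAction.orbit N₁ x})
    (Part₂ : Set (Set Ω₂)) (hPart₂ : Part₂ = {S | ∃ x ∈ MulAction.orbit K₂ x₂, S = MulAction.orbit N₂ x})
    (ψ : (K₁ ⧸ N₁) ≃* (K₂ ⧸ N₂))
    (φ : Set Ω₁ → Set Ω₂) (hφ : Set.BijOn φ Part₁ Part₂)
    (hcompat : ∀ σ : K₁, ∀ τ : K₂,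
      ψ (QuotientGroup.mk σ) = QuotientGroup.mk τ →
      ∀ Δ ∈ Part₁, φ ((σ • ·) '' Δ) = (τ • ·) '' (φ Δ))
    (X : Set (Ω₁ × Ω₂)) (hX : X = ⋃ Δ ∈ Part₁, Δ ×ˢ φ Δ) :
    (∀ σ : K₁, ∀ τ : K₂, ψ (QuotientGroup.mk σ) = QuotientGroup.mk τ →
       ∀ a ∈ X, (σ • a.1, τ • a.2) ∈ X) ∧
    (∀ a ∈ X, ∀ b ∈ X, ∃ σ : K₁, ∃ τ : K₂,
       ψ (QuotientGroup.mk σ) = QuotientGroup.mk τ ∧ σ • a.1 = b.1 ∧ τ • a.2 = b.2) := by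
  -- closure of Part₁ under the image action
  have himg : ∀ (σ : K₁), ∀ Δ ∈ Part₁, (σ • ·) '' Δ ∈ Part₁ := by
    intro σ Δ hΔ
    rw [hPart₁] at hΔ ⊢
    obtain ⟨x, hx, rfl⟩ := hΔ
    obtain ⟨g, rfl⟩ := hx
    exact ⟨σ • g • x₁, ⟨σ * g, by simp [mul_smul]⟩, img_orbit N₁ σ _⟩
  constructor
  · intro σ τ hψ a ha
    rw [hX] at ha ⊢
    simp only [Set.mem_iUnion] at ha ⊢
    obtain ⟨Δ, hΔ, ha1, ha2⟩ := ha
    refine ⟨(σ • ·) '' Δ, himg σ Δ hΔ, ⟨a.1, ha1, rfl⟩, ?_⟩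
    rw [hcompat σ τ hψ Δ hΔ]
    exact ⟨a.2, ha2, rfl⟩
  · intro a ha b hb
    rw [hX] at ha hb
    simp only [Set.mem_iUnion] at ha hb
    obtain ⟨Δa, hΔa, ha1, ha2⟩ := ha
    obtain ⟨Δb, hΔb, hb1, hb2⟩ := hb
    -- a.1 and b.1 lie in orbit K₁ x₁
    have hΔa' := hΔa; have hΔb' := hΔb
    rw [hPart₁] at hΔa' hΔb'
    obtain ⟨ya, hya, rfl⟩ := hΔa'
    obtain ⟨yb, hyb, rfl⟩ := hΔb'
    have ha1K : a.1 ∈ MulAction.orbit K₁ x₁ := by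
      obtain ⟨n, hn⟩ := ha1
      obtain ⟨g, rfl⟩ := hya
      refine ⟨(n : K₁) * g, ?_⟩
      show ((n : K₁) * g) • x₁ = a.1
      rw [mul_smul]; exact hn
    have hb1K : b.1 ∈ MulAction.orbit K₁ x₁ := by
      obtain ⟨n, hn⟩ := hb1
      obtain ⟨g, rfl⟩ := hyb
      refine ⟨(n : K₁) * g, ?_⟩
      show ((n : K₁) * g) • x₁ = b.1
      rw [mul_smul]; exact hn
    -- find σ with σ • a.1 = b.1
    obtain ⟨σ, hσ⟩ : ∃ σ : K₁, σ • a.1 = b.1 := by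
      obtain ⟨g, hg⟩ := ha1K
      obtain ⟨h, hh⟩ := hb1K
      have hg' : g • x₁ = a.1 := hg
      have hh' : h • x₁ = b.1 := hh
      refine ⟨h * g⁻¹, ?_⟩
      rw [← hg', ← hh', smul_smul, inv_mul_cancel_right]
    -- σ maps Δa to Δb
    have hmap : (σ • ·) '' MulAction.orbit N₁ ya = MulAction.orbit N₁ yb := by
      rw [img_orbit]
      have h1 : σ • a.1 ∈ MulAction.orbit N₁ (σ • ya) := by
        rw [← img_orbit]; exact ⟨a.1, ha1, rfl⟩
      have e1 : MulAction.orbit N₁ (σ • ya) = MulAction.orbit N₁ (σ • a.1) :=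
        (MulAction.orbit_eq_iff.mpr h1).symm
      rw [e1, hσ]
      exact MulAction.orbit_eq_iff.mpr hb1
    obtain ⟨τ₀, hτ₀⟩ := QuotientGroup.mk_surjective (ψ (QuotientGroup.mk σ))
    have hφeq : φ (MulAction.orbit N₁ yb) = (τ₀ • ·) '' (φ (MulAction.orbit N₁ ya)) := by
      rw [← hmap]; exact hcompat σ τ₀ hτ₀.symm _ hΔa
    -- τ₀ • a.2 ∈ φ Δb
    have hτa2 : τ₀ • a.2 ∈ φ (MulAction.orbit N₁ yb) := by
      rw [hφeq]; exact ⟨a.2, ha2, rfl⟩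
    -- φ Δb is an N₂-orbit
    have hφb : φ (MulAction.orbit N₁ yb) ∈ Part₂ := hφ.mapsTo hΔb
    rw [hPart₂] at hφb
    obtain ⟨z, _, hz⟩ := hφb
    rw [hz] at hτa2 hb2
    obtain ⟨⟨m, hm⟩, hmeq⟩ := hτa2
    obtain ⟨⟨n, hn⟩, hneq⟩ := hb2
    refine ⟨σ, n * m⁻¹ * τ₀, ?_, hσ, ?_⟩
    · rw [← hτ₀, QuotientGroup.eq]
      have hmem : n * m⁻¹ ∈ N₂ := N₂.mul_mem hn (N₂.inv_mem hm)
      have hc := Subgroup.Normal.conj_mem ‹N₂.Normal› _ hmem τ₀⁻¹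
      simpa [mul_assoc] using hc
    · show (n * m⁻¹ * τ₀) • a.2 = b.2
      have hmeq' : m • z = τ₀ • a.2 := hmeq
      have hneq' : n • z = b.2 := hneq
      rw [mul_smul, mul_smul, ← hmeq', inv_smul_smul, hneq']
end

section
/- Let H be an elementary abelian group of order 8 and let h : ℤ/7ℤ → H∖{e} be a bijection such that for every nonzero i ∈ ℤ/7ℤ, the map j ↦ h_j · h_{j+i} is a bijection from ℤ/7ℤ onto H∖{e}. Then the permutation of H fixing e and sending h_i to h_{i+1} for every i ∈ ℤ/7ℤ is an automorphism of H. -/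
/-!
Identify `H` with `𝔽₂³` and write `v j` for the image of `h j`. For a nonzero functional `w`, the
index set `L_w = {j | w (v j) = 0}` has three elements, and since `j ↦ v j + v (j + i)` hits every
nonzero vector once, `j ∈ L_w ↔ j + i ∈ L_w` holds for exactly three `j`. Hence `L_w` is a planar
difference set in `ℤ/7`: a translate of `{0, 1, 3}` or of `{0, 2, 3}`. Distinct `L_w` meet in one
point, while a translate of `{0, 1, 3}` meets only three translates of `{0, 2, 3}` in one point, so
the seven sets `L_w` are all the translates of one of the two. This family is invariant under
`j ↦ j - 1`, so each `j ↦ w (v (j + 1))` vanishes exactly where some `j ↦ w' (v j)` does; being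
`𝔽₂`-valued they coincide, and therefore the shift preserves every relation `v a + v c = v d`.
-/

open Finset Matrix

theorem nonempty_addEquiv_pi_zmod {G : Type*} [AddCommGroup G] [Finite G] {p n : ℕ}
    [hp : Fact p.Prime] (hG : ∀ x : G, p • x = 0) (hcard : Nat.card G = p ^ n) :
    Nonempty (G ≃+ (Fin n → ZMod p)) := by
  let _ : Module (ZMod p) G := AddCommGroup.zmodModule hG
  have hrank : Module.finrank (ZMod p) G = n := by
    rw [← FiniteField.pow_finrank_eq_natCard p G] at hcard
    exact Nat.pow_right_injective hp.out.two_le hcard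
  -- instance search gets stuck on the local module structure, so the instances are supplied
  exact ⟨(@Module.finBasisOfFinrankEq (ZMod p) G _ _ _ (.of_divisionRing _ _) _ .of_finite n
    hrank).equivFun.toAddEquiv⟩

theorem exists_mulAut_apply_eq {G ι : Type*} [Group G] (hexp : ∀ x : G, x * x = 1)
    {h : ι → G} (hh : Set.BijOn h Set.univ {x | x ≠ 1}) (τ : Equiv.Perm ι)
    (hτ : ∀ a c d, h a * h c = h d → h (τ a) * h (τ c) = h (τ d)) :
    ∃ f : MulAut G, ∀ i, f (h i) = h (τ i) := by
  classical
  have h_ne_one (i : ι) : h i ≠ 1 := hh.mapsTo (Set.mem_univ i)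
  have eq_one_or (x : G) : x = 1 ∨ ∃ i, h i = x := by
    by_cases hx : x = 1
    · exact .inl hx
    · obtain ⟨i, -, hi⟩ := hh.surjOn hx
      exact .inr ⟨i, hi⟩
  let σ : G → G := fun x => if hx : x = 1 then 1 else h (τ (hh.surjOn hx).choose)
  have σ_one : σ 1 = 1 := dif_pos rfl
  have σ_h (i : ι) : σ (h i) = h (τ i) := by
    have hi := (hh.surjOn (h_ne_one i)).choose_spec.2
    simp only [σ, dif_neg (h_ne_one i)]
    rw [hh.injOn (Set.mem_univ _) (Set.mem_univ _) hi]
  have σ_mul (x y : G) : σ (x * y) = σ x * σ y := by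
    rcases eq_one_or x with rfl | ⟨a, rfl⟩
    · rw [one_mul, σ_one, one_mul]
    rcases eq_one_or y with rfl | ⟨c, rfl⟩
    · rw [mul_one, σ_one, mul_one]
    rcases eq_one_or (h a * h c) with hac | ⟨d, hd⟩
    · have hca : c = a := hh.injOn (Set.mem_univ _) (Set.mem_univ _)
        (mul_left_cancel (hac.trans (hexp (h a)).symm))
      rw [hac, σ_one, hca, σ_h, hexp]
    · rw [← hd, σ_h, σ_h, σ_h, hτ a c d hd.symm]
  have σ_injective : Function.Injective σ := by
    intro x y hxy
    rcases eq_one_or x with rfl | ⟨a, rfl⟩ <;> rcases eq_one_or y with rfl | ⟨c, rfl⟩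
    · rfl
    · exact absurd hxy.symm (by rw [σ_one, σ_h]; exact h_ne_one _)
    · exact absurd hxy (by rw [σ_one, σ_h]; exact h_ne_one _)
    · rw [σ_h, σ_h] at hxy
      rw [τ.injective (hh.injOn (Set.mem_univ _) (Set.mem_univ _) hxy)]
  have σ_surjective : Function.Surjective σ := by
    intro y
    rcases eq_one_or y with rfl | ⟨i, rfl⟩
    · exact ⟨1, σ_one⟩
    · exact ⟨h (τ.symm i), by rw [σ_h, τ.apply_symm_apply]⟩
  exact ⟨MulEquiv.ofBijective (MonoidHom.mk' σ σ_mul) ⟨σ_injective, σ_surjective⟩, σ_h⟩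

theorem card_filter_comp_of_bijOn {ι α : Type*} [Fintype ι] [Fintype α] [DecidableEq α]
    {u : ι → α} {z : α}
    (hu : Set.BijOn u Set.univ {x | x ≠ z}) (p : α → Prop) [DecidablePred p] :
    #{j | p (u j)} = #{x | x ≠ z ∧ p x} := by
  refine card_nbij u (fun j hj => ?_) (hu.injOn.mono (Set.subset_univ _)) (fun x hx => ?_)
  · simp only [coe_filter, mem_univ, true_and, Set.mem_ofPred_eq] at hj ⊢
    exact ⟨hu.mapsTo (Set.mem_univ j), hj⟩
  · simp only [coe_filter, mem_univ, true_and, Set.mem_ofPred_eq] at hx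
    obtain ⟨j, -, rfl⟩ := hu.surjOn hx.1
    exact ⟨j, by simpa using hx.2, rfl⟩

theorem zmod_two_eq_iff (a b : ZMod 2) : a = b ↔ (a = 0 ↔ b = 0) := by
  revert a b; decide

theorem dotProduct_add_eq_zero_iff {n : Type*} [Fintype n] (w x y : n → ZMod 2) :
    w ⬝ᵥ (x + y) = 0 ↔ (w ⬝ᵥ x = 0 ↔ w ⬝ᵥ y = 0) := by
  rw [dotProduct_add, CharTwo.add_eq_zero, zmod_two_eq_iff]

theorem card_dotProduct_eq_zero : ∀ w : Fin 3 → ZMod 2, w ≠ 0 →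
    #{x : Fin 3 → ZMod 2 | x ≠ 0 ∧ w ⬝ᵥ x = 0} = 3 := by decide

theorem card_dotProduct_eq_zero_and : ∀ w w' : Fin 3 → ZMod 2, w ≠ 0 → w' ≠ 0 → w ≠ w' →
    #{x : Fin 3 → ZMod 2 | x ≠ 0 ∧ w ⬝ᵥ x = 0 ∧ w' ⬝ᵥ x = 0} = 1 := by decide

def translates {G : Type*} [AddGroup G] [Fintype G] [DecidableEq G] (D : Finset G) :
    Finset (Finset G) :=
  univ.image fun t => D.image (· + t)

theorem image_add_mem_translates {G : Type*} [AddCommGroup G] [Fintype G] [DecidableEq G]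
    {D s : Finset G} (hs : s ∈ translates D) (c : G) : s.image (· + c) ∈ translates D := by
  obtain ⟨t, -, rfl⟩ := mem_image.mp hs
  refine mem_image.mpr ⟨t + c, mem_univ _, ?_⟩
  simp only [image_image, Function.comp_def, add_assoc]

local notation "𝒯₁" => translates ({0, 1, 3} : Finset (ZMod 7))
local notation "𝒯₂" => translates ({0, 2, 3} : Finset (ZMod 7))

-- Counting the patterns of `(j ∈ s, j + i ∈ s)` gives `#{j ∈ s | j + i ∈ s} = 1` for `i ≠ 0`.
set_option maxRecDepth 10000 in
theorem mem_translates_of_card_filter_iff : ∀ s : Finset (ZMod 7), #s = 3 →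
    (∀ i ≠ 0, #{j | j ∈ s ↔ j + i ∈ s} = 3) → s ∈ 𝒯₁ ∨ s ∈ 𝒯₂ := by
  decide

theorem disjoint_translates : Disjoint 𝒯₁ 𝒯₂ := by decide

theorem card_translates_013 : #𝒯₁ = 7 := by decide

theorem card_translates_023 : #𝒯₂ = 7 := by decide

set_option maxRecDepth 10000 in
theorem card_translates_013_inter_eq_one : ∀ s ∈ 𝒯₂, #{t ∈ 𝒯₁ | #(s ∩ t) = 1} = 3 := by
  decide

set_option maxRecDepth 10000 in
theorem card_translates_023_inter_eq_one : ∀ s ∈ 𝒯₁, #{t ∈ 𝒯₂ | #(s ∩ t) = 1} = 3 := by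
  decide

theorem card_inter_le_card_filter {α : Type*} [DecidableEq α] {F A B : Finset (Finset α)}
    (hAB : Disjoint A B) (hF : (F : Set (Finset α)).Pairwise fun s t => #(s ∩ t) = 1)
    {s : Finset α} (hsF : s ∈ F) (hsA : s ∈ A) : #(F ∩ B) ≤ #{t ∈ B | #(s ∩ t) = 1} := by
  refine card_le_card fun t ht => ?_
  obtain ⟨htF, htB⟩ := mem_inter.mp ht
  have hst : s ≠ t := fun h => disjoint_left.mp hAB hsA (h ▸ htB)
  exact mem_filter.mpr ⟨htB, hF hsF htF hst⟩

theorem eq_translates_of_pairwise_card_inter {F : Finset (Finset (ZMod 7))}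
    (hF : F ⊆ 𝒯₁ ∪ 𝒯₂) (hcard : 7 ≤ #F)
    (hpair : (F : Set (Finset (ZMod 7))).Pairwise fun s t => #(s ∩ t) = 1) :
    F = 𝒯₁ ∨ F = 𝒯₂ := by
  rcases (F ∩ 𝒯₁).eq_empty_or_nonempty with h₁ | ⟨s₁, hs₁⟩
  · have hsub : F ⊆ 𝒯₂ := fun s hs =>
      (mem_union.mp (hF hs)).resolve_left fun h => by simpa [h₁] using mem_inter.mpr ⟨hs, h⟩
    exact .inr (eq_of_subset_of_card_le hsub (by rw [card_translates_023]; exact hcard))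
  rcases (F ∩ 𝒯₂).eq_empty_or_nonempty with h₂ | ⟨s₂, hs₂⟩
  · have hsub : F ⊆ 𝒯₁ := fun s hs =>
      (mem_union.mp (hF hs)).resolve_right fun h => by simpa [h₂] using mem_inter.mpr ⟨hs, h⟩
    exact .inl (eq_of_subset_of_card_le hsub (by rw [card_translates_013]; exact hcard))
  rw [mem_inter] at hs₁ hs₂
  have h₁ := card_inter_le_card_filter disjoint_translates hpair hs₁.1 hs₁.2
  have h₂ := card_inter_le_card_filter disjoint_translates.symm hpair hs₂.1 hs₂.2
  rw [card_translates_023_inter_eq_one _ hs₁.2] at h₁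
  rw [card_translates_013_inter_eq_one _ hs₂.2] at h₂
  have := card_union_le (F ∩ 𝒯₁) (F ∩ 𝒯₂)
  rw [← inter_union_distrib_left, inter_eq_left.mpr hF] at this
  omega

def kerIndices (v : ZMod 7 → Fin 3 → ZMod 2) (w : Fin 3 → ZMod 2) : Finset (ZMod 7) :=
  {j | w ⬝ᵥ v j = 0}

section kerIndices

variable {v : ZMod 7 → Fin 3 → ZMod 2}

theorem mem_kerIndices {w : Fin 3 → ZMod 2} {j : ZMod 7} :
    j ∈ kerIndices v w ↔ w ⬝ᵥ v j = 0 := by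
  simp [kerIndices]

theorem card_kerIndices (hv : Set.BijOn v Set.univ {x | x ≠ 0}) {w : Fin 3 → ZMod 2}
    (hw : w ≠ 0) : #(kerIndices v w) = 3 :=
  (card_filter_comp_of_bijOn hv (w ⬝ᵥ · = 0)).trans (card_dotProduct_eq_zero w hw)

theorem card_kerIndices_inter (hv : Set.BijOn v Set.univ {x | x ≠ 0})
    {w w' : Fin 3 → ZMod 2} (hw : w ≠ 0) (hw' : w' ≠ 0) (hne : w ≠ w') :
    #(kerIndices v w ∩ kerIndices v w') = 1 := by
  rw [kerIndices, kerIndices, ← filter_and]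
  exact (card_filter_comp_of_bijOn hv fun x => w ⬝ᵥ x = 0 ∧ w' ⬝ᵥ x = 0).trans
    (card_dotProduct_eq_zero_and w w' hw hw' hne)

theorem kerIndices_injOn (hv : Set.BijOn v Set.univ {x | x ≠ 0}) :
    Set.InjOn (kerIndices v) {w | w ≠ 0} := by
  intro w hw w' hw' h
  by_contra hne
  have h₁ := card_kerIndices_inter hv hw hw' hne
  rw [h, inter_self, card_kerIndices hv hw'] at h₁
  omega

theorem card_filter_mem_kerIndices_iff
    (hsum : ∀ i ≠ 0, Set.BijOn (fun j => v j + v (j + i)) Set.univ {x | x ≠ 0})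
    {w : Fin 3 → ZMod 2} (hw : w ≠ 0) {i : ZMod 7} (hi : i ≠ 0) :
    #{j | j ∈ kerIndices v w ↔ j + i ∈ kerIndices v w} = 3 := by
  have h := card_filter_comp_of_bijOn (hsum i hi) (w ⬝ᵥ · = 0)
  simp only [dotProduct_add_eq_zero_iff] at h
  simp only [mem_kerIndices]
  rw [h, card_dotProduct_eq_zero w hw]

theorem image_kerIndices (hv : Set.BijOn v Set.univ {x | x ≠ 0})
    (hsum : ∀ i ≠ 0, Set.BijOn (fun j => v j + v (j + i)) Set.univ {x | x ≠ 0}) :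
    (univ.erase 0).image (kerIndices v) = 𝒯₁ ∨
      (univ.erase 0).image (kerIndices v) = 𝒯₂ := by
  apply eq_translates_of_pairwise_card_inter
  · intro s hs
    obtain ⟨w, hw, rfl⟩ := mem_image.mp hs
    have hw : w ≠ 0 := (mem_erase.mp hw).1
    exact mem_union.mpr (mem_translates_of_card_filter_iff _ (card_kerIndices hv hw)
      fun i hi => card_filter_mem_kerIndices_iff hsum hw hi)
  · rw [card_image_of_injOn (fun w hw w' hw' => kerIndices_injOn hv (mem_erase.mp hw).1
      (mem_erase.mp hw').1)]
    decide
  · simp only [coe_image, coe_erase, coe_univ]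
    rintro _ ⟨w, hw, rfl⟩ _ ⟨w', hw', rfl⟩ hne
    exact card_kerIndices_inter hv hw.2 hw'.2 fun h => hne (h ▸ rfl)

theorem exists_dotProduct_eq_zero_iff_shift (hv : Set.BijOn v Set.univ {x | x ≠ 0})
    (hsum : ∀ i ≠ 0, Set.BijOn (fun j => v j + v (j + i)) Set.univ {x | x ≠ 0})
    {w : Fin 3 → ZMod 2} (hw : w ≠ 0) :
    ∃ w' : Fin 3 → ZMod 2, ∀ j, (w' ⬝ᵥ v j = 0 ↔ w ⬝ᵥ v (j + 1) = 0) := by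
  have hmem : kerIndices v w ∈ (univ.erase 0).image (kerIndices v) :=
    mem_image_of_mem _ (mem_erase.mpr ⟨hw, mem_univ _⟩)
  have hshift : (kerIndices v w).image (· + -1) ∈ (univ.erase 0).image (kerIndices v) := by
    rcases image_kerIndices hv hsum with h | h <;> rw [h] at hmem ⊢ <;>
      exact image_add_mem_translates hmem _
  obtain ⟨w', -, hw'⟩ := mem_image.mp hshift
  refine ⟨w', fun j => ?_⟩
  rw [← mem_kerIndices, hw', mem_image, ← mem_kerIndices]
  constructor
  · rintro ⟨k, hk, rfl⟩
    simpa using hk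
  · exact fun h => ⟨j + 1, h, by ring⟩

theorem add_succ_eq_succ_of_add_eq (hv : Set.BijOn v Set.univ {x | x ≠ 0})
    (hsum : ∀ i ≠ 0, Set.BijOn (fun j => v j + v (j + i)) Set.univ {x | x ≠ 0})
    {a c d : ZMod 7} (h : v a + v c = v d) : v (a + 1) + v (c + 1) = v (d + 1) := by
  have hzero : v (a + 1) + v (c + 1) + v (d + 1) = 0 := by
    refine dotProduct_eq_zero _ fun w => ?_
    rcases eq_or_ne w 0 with rfl | hw
    · exact dotProduct_zero _
    obtain ⟨w', hw'⟩ := exists_dotProduct_eq_zero_iff_shift hv hsum hw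
    have hshift (j : ZMod 7) : v (j + 1) ⬝ᵥ w = w' ⬝ᵥ v j := by
      rw [dotProduct_comm, zmod_two_eq_iff, hw']
    rw [add_dotProduct, add_dotProduct, hshift, hshift, hshift, ← dotProduct_add,
      ← dotProduct_add, h, CharTwo.add_self_eq_zero, dotProduct_zero]
  exact CharTwo.add_eq_zero.mp hzero

end kerIndices

theorem stmt_8 (H : Type*) [CommGroup H] [Fintype H]
    (hcard : Fintype.card H = 8) (hexp : ∀ x : H, x * x = 1)
    (h : ZMod 7 → H) (hbij : Set.BijOn h Set.univ {x : H | x ≠ 1})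
    (hprod : ∀ i : ZMod 7, i ≠ 0 →
      Set.BijOn (fun j : ZMod 7 => h j * h (j + i)) Set.univ {x : H | x ≠ 1}) :
    ∃ f : MulAut H, ∀ i : ZMod 7, f (h i) = h (i + 1) := by
  obtain ⟨e⟩ := nonempty_addEquiv_pi_zmod (G := Additive H) (p := 2) (n := 3)
    (fun x => (two_nsmul x).trans (hexp x.toMul))
    ((Nat.card_congr Additive.toMul).trans (Nat.card_eq_fintype_card.trans hcard))
  have he : Set.BijOn (fun x : H => e (.ofMul x)) {x | x ≠ 1} {y | y ≠ 0} :=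
    (Additive.ofMul.trans e.toEquiv).bijOn fun x => by simp
  have hsum (i : ZMod 7) (hi : i ≠ 0) :
      Set.BijOn (fun j => e (.ofMul (h j)) + e (.ofMul (h (j + i)))) Set.univ {y | y ≠ 0} :=
    (he.comp (hprod i hi)).congr fun j _ => map_add e _ _
  refine exists_mulAut_apply_eq hexp hbij (Equiv.addRight 1) fun a c d had => ?_
  apply Additive.ofMul.injective (e.injective ?_)
  simpa using add_succ_eq_succ_of_add_eq (he.comp hbij) hsum (by simpa using congrArg (e ∘ .ofMul) had)
end

section
/- Let G ≅ C₃ × C_{3^k} with k ≥ 2. Then the image A₁ of the power map x ↦ x^{3^{k−1}} is a subgroup of G of order 3, and A₁ is the unique subgroup of order 3 that is invariant under every automorphism of G; i.e., every other subgroup of order 3 is mapped to a different subgroup by some automorphism of G. -/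
/-!
For a prime `p` and `G = ZMod p × ZMod (p ^ k)`, the subgroup `p ^ (k - 1) • G` is generated by
`g = (0, p ^ (k - 1))`, of order `p`, and is characteristic since multiplication by an integer
commutes with every homomorphism. If `L ≠ ⟨g⟩` also has order `p`, the shear
`(a, b) ↦ (a, b + a • p ^ (k - 1))` moves each `x ∈ L` by an element of `⟨g⟩`, which is `0`
only when `x.1 = 0`. Distinct subgroups of prime order meet trivially, so if the shear fixed `L`,
every element of `L` would have `x.1 = 0` and `p • x = 0`, forcing `L ≤ ⟨g⟩`.
-/

open AddSubgroup

theorem AddSubgroup.map_range_nsmulAddMonoidHom {G H : Type*} [AddCommGroup G] [AddCommGroup H]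
    (f : G →+ H) (hf : Function.Surjective f) (n : ℕ) :
    (nsmulAddMonoidHom n : G →+ G).range.map f = (nsmulAddMonoidHom n : H →+ H).range := by
  have hcomm : f.comp (nsmulAddMonoidHom n) = (nsmulAddMonoidHom n).comp f :=
    AddMonoidHom.ext fun x => map_nsmul f n x
  rw [← AddMonoidHom.range_comp, hcomm, AddMonoidHom.range_comp,
    AddMonoidHom.range_eq_top_of_surjective f hf, ← AddMonoidHom.range_eq_map]

theorem AddSubgroup.eq_zero_of_mem_of_mem_of_ne {G : Type*} [AddGroup G] {p : ℕ}
    [hp : Fact p.Prime] {L M : AddSubgroup G} (hL : Nat.card L = p) (hM : Nat.card M = p)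
    (hne : L ≠ M) {y : G}
    (hyL : y ∈ L) (hyM : y ∈ M) : y = 0 := by
  by_contra hy
  have hgen : ∀ N : AddSubgroup G, Nat.card N = p → y ∈ N → zmultiples y = N := by
    intro N hN hyN
    have : Finite N := Nat.finite_of_card_ne_zero (hN ▸ hp.out.ne_zero)
    have hord : addOrderOf y = p :=
      addOrderOf_eq_prime
        (addOrderOf_dvd_iff_nsmul_eq_zero.mp ((N.addOrderOf_dvd_natCard hyN).trans hN.dvd)) hy
    exact eq_of_le_of_card_ge (zmultiples_le.mpr hyN) (by rw [hN, Nat.card_zmultiples, hord])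
  exact hne ((hgen L hL hyL).symm.trans (hgen M hM hyM))

namespace AddAut

variable {G : Type*} [AddCommGroup G]

def transvection (φ : G →+ G) (hφ : ∀ x, φ (φ x) = 0) : AddAut G where
  toFun x := x + φ x
  invFun x := x - φ x
  left_inv x := by simp [hφ]
  right_inv x := by simp [hφ]
  map_add' x y := by simp only [map_add]; abel

end AddAut

section PPowGen

variable (p : ℕ) {k : ℕ}

def pPowGen (k : ℕ) : ZMod p × ZMod (p ^ k) := (0, (p ^ (k - 1) : ℕ))

theorem nsmul_pPowGen (k : ℕ) : p • pPowGen p k = 0 := by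
  refine Prod.ext (by simp [pPowGen]) ?_
  rw [pPowGen, Prod.smul_snd, nsmul_eq_mul, ← Nat.cast_mul, ← pow_succ', Prod.snd_zero,
    ZMod.natCast_eq_zero_iff]
  exact pow_dvd_pow p (by omega)

theorem addOrderOf_pPowGen [Fact p.Prime] (hk : 1 ≤ k) : addOrderOf (pPowGen p k) = p := by
  refine addOrderOf_eq_prime (nsmul_pPowGen p k) fun h => ?_
  have h2 := congrArg Prod.snd h
  rw [pPowGen, Prod.snd_zero, ZMod.natCast_eq_zero_iff,
    Nat.pow_dvd_pow_iff_le_right (Fact.out : p.Prime).one_lt] at h2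
  omega

theorem range_nsmul_eq_zmultiples_pPowGen [NeZero p] (hk : 2 ≤ k) :
    (nsmulAddMonoidHom (p ^ (k - 1)) : ZMod p × ZMod (p ^ k) →+ _).range =
      zmultiples (pPowGen p k) := by
  have hgen : p ^ (k - 1) • ((0, 1) : ZMod p × ZMod (p ^ k)) = pPowGen p k := by
    simp [pPowGen]
  refine le_antisymm ?_ (zmultiples_le.mpr ⟨(0, 1), hgen⟩)
  rintro _ ⟨x, rfl⟩
  have hx : x = (x.1, 0) + x.2.val • ((0, 1) : ZMod p × ZMod (p ^ k)) := by
    ext <;> simp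
  have hfst : p ^ (k - 1) • ((x.1, 0) : ZMod p × ZMod (p ^ k)) = 0 := by
    obtain ⟨m, hm⟩ : p ∣ p ^ (k - 1) := dvd_pow_self p (by omega)
    ext <;> simp [hm]
  show p ^ (k - 1) • x ∈ _
  rw [hx, nsmul_add, hfst, zero_add, smul_comm, hgen]
  exact nsmul_mem (mem_zmultiples _) _

theorem mem_zmultiples_pPowGen [NeZero p] (hk : 1 ≤ k) {x : ZMod p × ZMod (p ^ k)} (h1 : x.1 = 0)
    (hp : p • x = 0) : x ∈ zmultiples (pPowGen p k) := by
  have hdvd : p ^ (k - 1) ∣ x.2.val := by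
    have h2 := congrArg Prod.snd hp
    rw [Prod.smul_snd, Prod.snd_zero, ← ZMod.natCast_zmod_val x.2, nsmul_eq_mul, ← Nat.cast_mul,
      ZMod.natCast_eq_zero_iff] at h2
    exact Nat.dvd_of_mul_dvd_mul_left (NeZero.pos p)
      (by rwa [← pow_succ', Nat.sub_add_cancel hk])
  obtain ⟨c, hc⟩ := hdvd
  refine ⟨c, Prod.ext (by simp [pPowGen, h1]) ?_⟩
  rw [← ZMod.natCast_zmod_val x.2, hc]
  simp [pPowGen, mul_comm]

def pPowLift (k : ℕ) : ZMod p →+ ZMod p × ZMod (p ^ k) :=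
  ZMod.lift p ⟨zmultiplesHom _ (pPowGen p k), by simpa using nsmul_pPowGen p k⟩

theorem pPowLift_intCast (n : ℤ) : pPowLift p k n = n • pPowGen p k :=
  ZMod.lift_coe _ _ n

theorem pPowLift_mem_zmultiples (a : ZMod p) : pPowLift p k a ∈ zmultiples (pPowGen p k) := by
  obtain ⟨n, rfl⟩ := ZMod.intCast_surjective a
  exact ⟨n, (pPowLift_intCast p n).symm⟩

theorem pPowLift_fst (a : ZMod p) : (pPowLift p k a).1 = 0 := by
  obtain ⟨n, rfl⟩ := ZMod.intCast_surjective a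
  simp [pPowLift_intCast, pPowGen]

theorem pPowLift_eq_zero_iff [Fact p.Prime] (hk : 1 ≤ k) {a : ZMod p} :
    pPowLift p k a = 0 ↔ a = 0 := by
  obtain ⟨n, rfl⟩ := ZMod.intCast_surjective a
  rw [pPowLift_intCast, ← addOrderOf_dvd_iff_zsmul_eq_zero, addOrderOf_pPowGen p hk,
    ZMod.intCast_zmod_eq_zero_iff_dvd]

def pPowShear (k : ℕ) : AddAut (ZMod p × ZMod (p ^ k)) :=
  AddAut.transvection ((pPowLift p k).comp (AddMonoidHom.fst _ _)) fun x => by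
    simp [pPowLift_fst]

theorem pPowShear_apply (x : ZMod p × ZMod (p ^ k)) : pPowShear p k x = x + pPowLift p k x.1 := rfl

theorem map_pPowShear_ne [Fact p.Prime] (hk : 1 ≤ k) {L : AddSubgroup (ZMod p × ZMod (p ^ k))}
    (hL : Nat.card L = p) (hne : L ≠ zmultiples (pPowGen p k)) :
    L.map (pPowShear p k).toAddMonoidHom ≠ L := by
  intro hfix
  have hcard : Nat.card (zmultiples (pPowGen p k)) = p := by
    rw [Nat.card_zmultiples, addOrderOf_pPowGen p hk]
  refine hne (eq_of_le_of_card_ge (fun x hx => ?_) (by rw [hL, hcard]))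
  have hlift : pPowLift p k x.1 ∈ L := by
    have hσx : pPowShear p k x ∈ L := hfix ▸ mem_map_of_mem _ hx
    simpa [pPowShear_apply] using sub_mem hσx hx
  have hfst : x.1 = 0 := (pPowLift_eq_zero_iff p hk).mp
    (eq_zero_of_mem_of_mem_of_ne hL hcard hne hlift (pPowLift_mem_zmultiples p _))
  exact mem_zmultiples_pPowGen p hk hfst
    (addOrderOf_dvd_iff_nsmul_eq_zero.mp ((L.addOrderOf_dvd_natCard hx).trans hL.dvd))

end PPowGen

theorem stmt_10 (k : ℕ) (hk : 2 ≤ k) :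
    ∃ A₁ : AddSubgroup (ZMod 3 × ZMod (3 ^ k)),
      (A₁ : Set (ZMod 3 × ZMod (3 ^ k))) = Set.range (fun x : ZMod 3 × ZMod (3 ^ k) => 3 ^ (k - 1) • x) ∧
      Nat.card A₁ = 3 ∧
      (∀ σ : AddAut (ZMod 3 × ZMod (3 ^ k)), A₁.map σ.toAddMonoidHom = A₁) ∧
      (∀ L : AddSubgroup (ZMod 3 × ZMod (3 ^ k)), Nat.card L = 3 → L ≠ A₁ →
        ∃ σ : AddAut (ZMod 3 × ZMod (3 ^ k)), L.map σ.toAddMonoidHom ≠ L) := by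
  have hrange := range_nsmul_eq_zmultiples_pPowGen 3 hk
  refine ⟨zmultiples (pPowGen 3 k), by rw [← hrange]; rfl, ?_, fun σ => ?_,
    fun L hL hne => ⟨pPowShear 3 k, map_pPowShear_ne 3 (by omega) hL hne⟩⟩
  · rw [Nat.card_zmultiples, addOrderOf_pPowGen 3 (by omega)]
  · rw [← hrange]
    exact map_range_nsmulAddMonoidHom _ σ.surjective _
end

section
/- Let G = H × P where H ≅ C₄ × C₂ and P is cyclic of odd prime order p. Let X ⊆ G satisfy: for every integer m coprime to 2p, if X^{(m)} ∩ X ≠ ∅ then X^{(m)} = X, where X^{(m)} = { x^m : x ∈ X }. Suppose X contains an element (h′, g′) with h′ of order 2 and g′ ≠ e in P. Then for every (h, g) ∈ X with h of order 4, the element (h⁻¹, g) also belongs to X. -/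
theorem stmt_14 (H P : Type*) [Group H] [CommGroup P]
    (hH : Nonempty (H ≃* Multiplicative (ZMod 4 × ZMod 2)))
    (p : ℕ) (hp : p.Prime) (hodd : Odd p)
    (hcyc : IsCyclic P) (hcardP : Nat.card P = p)
    (X : Set (H × P))
    (hX : ∀ m : ℤ, IsCoprime m (2 * p : ℤ) →
      ((fun x : H × P => x ^ m) '' X ∩ X ≠ ∅ → (fun x : H × P => x ^ m) '' X = X))
    (h' : H) (g' : P) (hmem : (h', g') ∈ X) (hordh' : orderOf h' = 2) (hg' : g' ≠ 1) :
    ∀ h : H, ∀ g : P, (h, g) ∈ X → orderOf h = 4 → (h⁻¹, g) ∈ X := by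
  intro h g hmemX hord4
  obtain ⟨k, hk⟩ := hodd
  set n : ℕ := 2 * p + 1 with hn
  set m : ℤ := (n : ℤ) with hm
  have hzp : ∀ x : H × P, x ^ m = x ^ n := fun x => zpow_natCast x n
  have hco : IsCoprime m (2 * p : ℤ) := ⟨1, -1, by rw [hm, hn]; push_cast; ring⟩
  have hPfix : ∀ x : P, x ^ n = x := by
    intro x
    have hxp : x ^ p = 1 :=
      orderOf_dvd_iff_pow_eq_one.mp (hcardP ▸ orderOf_dvd_natCard x)
    have e : n = p * 2 + 1 := by omega
    rw [e, pow_succ, pow_mul, hxp, one_pow, one_mul]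
  have hfixh : h' ^ n = h' := by
    have h2 : h' ^ 2 = 1 := by rw [← hordh']; exact pow_orderOf_eq_one h'
    have e : n = 2 * p + 1 := hn
    rw [e, pow_succ, pow_mul, h2, one_pow, one_mul]
  have hXeq : (fun x : H × P => x ^ m) '' X = X := by
    apply hX m hco
    intro hempty
    refine Set.eq_empty_iff_forall_notMem.mp hempty ((h', g') : H × P) ⟨?_, hmem⟩
    exact ⟨(h', g'), hmem, by show ((h', g') : H × P) ^ m = (h', g'); rw [hzp, Prod.pow_mk, hfixh, hPfix]⟩
  have hmh : h ^ n = h⁻¹ := by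
    have h4 : h ^ 4 = 1 := by rw [← hord4]; exact pow_orderOf_eq_one h
    have e : n = 4 * k + 3 := by omega
    rw [e, pow_add, pow_mul, h4, one_pow, one_mul]
    have h31 : h ^ 3 * h = 1 := by rw [← pow_succ, h4]
    exact eq_inv_of_mul_eq_one_left h31
  have hin : ((h, g) : H × P) ^ m ∈ X := by
    rw [← hXeq]; exact ⟨(h, g), hmemX, rfl⟩
  rwa [hzp, Prod.pow_mk, hmh, hPfix] at hin
end
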